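/- Hermite–Genocchi formula: for f ∈ C^n(ℝ) and real numbers a₀,...,aₙ (not necessarily distinct), the divided difference f[a₀,...,aₙ] equals the integral over the standard n-simplex Sₙ = {t ∈ ℝ₊ⁿ : ∑ tₖ ≤ 1} of f⁽ⁿ⁾(t₀a₀ + t₁a₁ + ... + tₙaₙ) dt₁...dtₙ, where t₀ = 1 − ∑_{k=1}^n tₖ. -/

import Mathlib

open MeasureTheory

/-- Divided difference at a (sorted) list of possibly repeated nodes: the usual
recursion, extended by the derivative formula when all nodes coincide
(for a monotone node list the first and last node agree iff all agree). -/
noncomputable def cDivDiff (f : ℝ → ℝ) : List ℝ → ℝ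
  | [] => 0
  | [x] => f x
  | x :: y :: rest =>
      if (y :: rest).getLast (by simp) = x then
        iteratedDeriv (rest.length + 1) f x / (rest.length + 1).factorial
      else
        (cDivDiff f (y :: rest) - cDivDiff f (x :: (y :: rest).dropLast)) /
          ((y :: rest).getLast (by simp) - x)
termination_by l => l.length
decreasing_by all_goals simp [List.length_dropLast]

/-- The standard `n`-simplex `Sₙ = {t ∈ ℝ₊ⁿ : ∑ₖ tₖ ≤ 1}`. -/
def stdSimplexSet (n : ℕ) : Set (Fin n → ℝ) :=
  {u | (∀ k, 0 ≤ u k) ∧ ∑ k, u k ≤ 1}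

/-!
Write `I(g; a₀, …, aₙ)` for the integral of `g(t₀a₀ + ⋯ + tₙaₙ)` over `Sₙ`. Slicing `S_{n+1}`
along its last coordinate (Fubini) and integrating `g'` along each slice by the fundamental
theorem of calculus gives
`I(g'; a₀, …, a_{n+1}) = (I(g; a_{n+1}, a₁, …, aₙ) - I(g; a₀, …, aₙ)) / (a_{n+1} - a₀)`,
which is the divided-difference recursion once `I` is known to be symmetric in the nodes.
Symmetry under the transposition of `a₀` and `aⱼ` is the change of variables exchanging `t₀` and
`tⱼ`, a reflection on each slice along the `j`-th coordinate; these transpositions generate all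
permutations. If all nodes equal `c`, then `I(g; a) = g(c) · vol Sₙ = g(c) / n!`, which is the
confluent case. Induction on `n` over sorted nodes then identifies `I(f⁽ⁿ⁾; a)` with
`f[a₀, …, aₙ]`.
-/
open scoped Nat

section

variable {E : Type*} [NormedAddCommGroup E] [NormedSpace ℝ E]

theorem isClosed_stdSimplexSet (n : ℕ) : IsClosed (stdSimplexSet n) := by
  simp only [stdSimplexSet, Set.ofPred_and, Set.ofPred_forall]
  exact (isClosed_iInter fun k => isClosed_le continuous_const (continuous_apply k)).inter
    (isClosed_le (by fun_prop) continuous_const)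

theorem measurableSet_stdSimplexSet (n : ℕ) : MeasurableSet (stdSimplexSet n) :=
  (isClosed_stdSimplexSet n).measurableSet

theorem isCompact_stdSimplexSet (n : ℕ) : IsCompact (stdSimplexSet n) := by
  refine (isCompact_Icc (a := (0 : Fin n → ℝ)) (b := 1)).of_isClosed_subset
    (isClosed_stdSimplexSet n) fun u ⟨hu0, hu1⟩ => ⟨hu0, fun k => ?_⟩
  calc u k ≤ ∑ j, u j := Finset.single_le_sum (fun j _ => hu0 j) (Finset.mem_univ k)
    _ ≤ 1 := hu1

theorem insertNth_mem_stdSimplexSet_iff {n : ℕ} (i : Fin (n + 1)) (x : ℝ) (v : Fin n → ℝ) :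
    Fin.insertNth i x v ∈ stdSimplexSet (n + 1) ↔
      v ∈ stdSimplexSet n ∧ x ∈ Set.Icc 0 (1 - ∑ k, v k) := by
  simp only [stdSimplexSet, Set.mem_ofPred_eq, Set.mem_Icc, Fin.forall_iff_succAbove i,
    Fin.insertNth_apply_same, Fin.insertNth_apply_succAbove, Fin.sum_univ_succAbove _ i]
  constructor
  · rintro ⟨⟨hx, hv⟩, hsum⟩
    exact ⟨⟨hv, by linarith⟩, hx, by linarith⟩
  · rintro ⟨⟨hv, -⟩, hx, hx'⟩
    exact ⟨⟨hx, hv⟩, by linarith⟩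

theorem setIntegral_stdSimplexSet_succ {n : ℕ} (i : Fin (n + 1))
    {g : (Fin (n + 1) → ℝ) → E} (hg : Continuous g) :
    ∫ u in stdSimplexSet (n + 1), g u =
      ∫ v in stdSimplexSet n, ∫ x in (0 : ℝ)..1 - ∑ k, v k, g (Fin.insertNth i x v) := by
  classical
  set S := stdSimplexSet (n + 1)
  let e := MeasurableEquiv.piFinSuccAbove (fun _ : Fin (n + 1) => ℝ) i
  have he : MeasurePreserving e.symm (volume.prod volume) volume := by
    simpa only [← Measure.volume_eq_prod] using
      (volume_preserving_piFinSuccAbove (fun _ : Fin (n + 1) => ℝ) i).symm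
  have hint : Integrable (S.indicator g) :=
    (integrable_indicator_iff (measurableSet_stdSimplexSet _)).2
      (hg.continuousOn.integrableOn_compact (isCompact_stdSimplexSet _))
  have hslice : ∀ v, ∫ x, S.indicator g (Fin.insertNth i x v) =
      (stdSimplexSet n).indicator
        (fun v => ∫ x in (0 : ℝ)..1 - ∑ k, v k, g (Fin.insertNth i x v)) v := by
    intro v
    by_cases hv : v ∈ stdSimplexSet n
    · have hrestrict : (fun x => S.indicator g (Fin.insertNth i x v)) =
          (Set.Icc 0 (1 - ∑ k, v k)).indicator fun x => g (Fin.insertNth i x v) := by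
        ext x
        rw [Set.indicator_apply, Set.indicator_apply]
        simp only [S, insertNth_mem_stdSimplexSet_iff, hv, true_and]
      rw [hrestrict, integral_indicator measurableSet_Icc, Set.indicator_of_mem hv,
        intervalIntegral.integral_of_le (by linarith [hv.2]), integral_Icc_eq_integral_Ioc]
    · simp [S, insertNth_mem_stdSimplexSet_iff, hv]
  calc ∫ u in S, g u = ∫ u, S.indicator g u :=
        (integral_indicator (measurableSet_stdSimplexSet _)).symm
    _ = ∫ p, S.indicator g (e.symm p) ∂(volume.prod volume) := (he.integral_comp' _).symm
    _ = ∫ v, ∫ x, S.indicator g (Fin.insertNth i x v) :=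
        integral_prod_symm _ ((he.integrable_comp_emb e.symm.measurableEmbedding).2 hint)
    _ = _ := by
        simp only [hslice]
        exact integral_indicator (measurableSet_stdSimplexSet n)

theorem setIntegral_stdSimplexSet_one_sub_sum_pow (n k : ℕ) :
    ∫ u in stdSimplexSet n, (1 - ∑ j, u j) ^ k = (k ! : ℝ) / (n + k)! := by
  induction n generalizing k with
  | zero =>
    have hS : stdSimplexSet 0 = Set.univ := by ext u; simp [stdSimplexSet]
    have hk : (k ! : ℝ) ≠ 0 := Nat.cast_ne_zero.2 k.factorial_ne_zero
    simp [hS, hk, measureReal_def, volume_pi]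
  | succ n ih =>
    have hinner : ∀ v : Fin n → ℝ,
        ∫ x in (0 : ℝ)..1 - ∑ j, v j, (1 - ∑ j, Fin.insertNth (Fin.last n) x v j) ^ k =
          (1 - ∑ j, v j) ^ (k + 1) / (k + 1) := by
      intro v
      simp only [Fin.sum_univ_succAbove _ (Fin.last n), Fin.insertNth_apply_same,
        Fin.insertNth_apply_succAbove, ← sub_sub, sub_right_comm _ _ (∑ j, v j)]
      simp [intervalIntegral.integral_comp_sub_left fun x => x ^ k, integral_pow]
    rw [setIntegral_stdSimplexSet_succ (Fin.last n) (by fun_prop)]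
    simp only [hinner, integral_div, ih, show n + 1 + k = n + (k + 1) by omega,
      Nat.factorial_succ k]
    push_cast
    field_simp

theorem volume_real_stdSimplexSet (n : ℕ) :
    volume.real (stdSimplexSet n) = 1 / n.factorial := by
  simpa using setIntegral_stdSimplexSet_one_sub_sum_pow n 0

noncomputable def baryPoint {n : ℕ} (a : Fin (n + 1) → ℝ) (u : Fin n → ℝ) : ℝ :=
  (1 - ∑ k, u k) * a 0 + ∑ k, u k * a k.succ

noncomputable def simplexIntegral {n : ℕ} (g : ℝ → E) (a : Fin (n + 1) → ℝ) : E :=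
  ∫ u in stdSimplexSet n, g (baryPoint a u)

@[fun_prop]
theorem continuous_baryPoint {n : ℕ} (a : Fin (n + 1) → ℝ) : Continuous (baryPoint a) := by
  unfold baryPoint; fun_prop

theorem baryPoint_const {n : ℕ} (c : ℝ) (u : Fin n → ℝ) : baryPoint (fun _ => c) u = c := by
  simp only [baryPoint, ← Finset.sum_mul]; ring

theorem simplexIntegral_const [CompleteSpace E] {n : ℕ} (g : ℝ → E) (c : ℝ) :
    simplexIntegral g (fun _ : Fin (n + 1) => c) = (n.factorial : ℝ)⁻¹ • g c := by
  rw [simplexIntegral]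
  simp only [baryPoint_const]
  rw [setIntegral_const, volume_real_stdSimplexSet, one_div]

theorem baryPoint_comp_swap_zero_succ_insertNth {n : ℕ} (a : Fin (n + 2) → ℝ)
    (j : Fin (n + 1)) (x : ℝ) (v : Fin n → ℝ) :
    baryPoint (a ∘ Equiv.swap 0 j.succ) (Fin.insertNth j x v) =
      baryPoint a (Fin.insertNth j (1 - ∑ k, v k - x) v) := by
  have hfix : ∀ k, Equiv.swap 0 j.succ (j.succAbove k).succ = (j.succAbove k).succ := fun k =>
    Equiv.swap_apply_of_ne_of_ne (Fin.succ_ne_zero _)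
      (Fin.succ_injective _ |>.ne (Fin.succAbove_ne j k))
  simp only [baryPoint, Function.comp_apply, Fin.sum_univ_succAbove _ j,
    Fin.insertNth_apply_same, Fin.insertNth_apply_succAbove, Equiv.swap_apply_left,
    Equiv.swap_apply_right, hfix]
  ring

theorem simplexIntegral_comp_swap_zero {n : ℕ} {g : ℝ → E} (hg : Continuous g)
    (a : Fin (n + 1) → ℝ) (j : Fin (n + 1)) :
    simplexIntegral g (a ∘ Equiv.swap 0 j) = simplexIntegral g a := by
  cases n with
  | zero => rw [Fin.fin_one_eq_zero j, Equiv.swap_self, Equiv.coe_refl, Function.comp_id]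
  | succ n =>
    cases j using Fin.cases with
    | zero => rw [Equiv.swap_self, Equiv.coe_refl, Function.comp_id]
    | succ j =>
      simp only [simplexIntegral]
      rw [setIntegral_stdSimplexSet_succ j (by fun_prop),
        setIntegral_stdSimplexSet_succ j (by fun_prop)]
      refine setIntegral_congr_fun (measurableSet_stdSimplexSet n) fun v _ => ?_
      simp only [baryPoint_comp_swap_zero_succ_insertNth]
      rw [intervalIntegral.integral_comp_sub_left
        (fun x => g (baryPoint a (Fin.insertNth j x v)))]
      simp

theorem simplexIntegral_comp_swap {n : ℕ} {g : ℝ → E} (hg : Continuous g)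
    (a : Fin (n + 1) → ℝ) (x y : Fin (n + 1)) :
    simplexIntegral g (a ∘ Equiv.swap x y) = simplexIntegral g a := by
  rcases eq_or_ne x 0 with rfl | hx
  · exact simplexIntegral_comp_swap_zero hg a y
  rcases eq_or_ne y 0 with rfl | hy
  · rw [Equiv.swap_comm]; exact simplexIntegral_comp_swap_zero hg a x
  rcases eq_or_ne y x with rfl | hyx
  · rw [Equiv.swap_self, Equiv.coe_refl, Function.comp_id]
  -- `swap x y = swap 0 x * swap 0 y * swap 0 x`
  rw [← Equiv.swap_mul_swap_mul_swap hy hyx, Equiv.swap_comm y 0]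
  simp only [Equiv.Perm.coe_mul, ← Function.comp_assoc, simplexIntegral_comp_swap_zero hg]

theorem simplexIntegral_comp_perm {n : ℕ} {g : ℝ → E} (hg : Continuous g)
    (a : Fin (n + 1) → ℝ) (σ : Equiv.Perm (Fin (n + 1))) :
    simplexIntegral g (a ∘ σ) = simplexIntegral g a := by
  induction σ using Equiv.Perm.swap_induction_on generalizing a with
  | one => rfl
  | swap_mul σ x y _ ih =>
    rw [Equiv.Perm.coe_mul, ← Function.comp_assoc, ih, simplexIntegral_comp_swap hg]

theorem intervalIntegral_deriv_comp_add_mul {g : ℝ → ℝ} (hg : Differentiable ℝ g)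
    (hg' : Continuous (deriv g)) (b c : ℝ) {d : ℝ} (hd : d ≠ 0) :
    ∫ x in (0 : ℝ)..c, deriv g (b + x * d) = (g (b + c * d) - g b) / d := by
  have hswap : ∀ x, b + x * d = d * x + b := fun x => by ring
  simp only [hswap]
  rw [intervalIntegral.integral_comp_mul_add _ hd,
    intervalIntegral.integral_deriv_eq_sub' g rfl (fun x _ => hg x) hg'.continuousOn]
  simp [div_eq_inv_mul]

theorem baryPoint_insertNth_last {n : ℕ} (a : Fin (n + 2) → ℝ) (v : Fin n → ℝ) (x : ℝ) :
    baryPoint a (Fin.insertNth (Fin.last n) x v) =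
      baryPoint (fun k => a k.castSucc) v + x * (a (Fin.last (n + 1)) - a 0) := by
  simp only [baryPoint, Fin.sum_univ_succAbove _ (Fin.last n), Fin.insertNth_apply_same,
    Fin.insertNth_apply_succAbove]
  simp only [Fin.succAbove_last, Fin.succ_last, Fin.succ_castSucc, Fin.castSucc_zero]
  ring

theorem simplexIntegral_deriv {n : ℕ} {g : ℝ → ℝ} (hg : Differentiable ℝ g)
    (hg' : Continuous (deriv g)) (a : Fin (n + 2) → ℝ) (hne : a (Fin.last (n + 1)) ≠ a 0) :
    simplexIntegral (deriv g) a =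
      (simplexIntegral g (fun k => a k.succ) - simplexIntegral g (fun k => a k.castSucc)) /
        (a (Fin.last (n + 1)) - a 0) := by
  set d := a (Fin.last (n + 1)) - a 0
  set a' : Fin (n + 1) → ℝ := Fin.cons (a (Fin.last (n + 1))) fun k => a k.succ.castSucc
  have hrot : (fun k => a k.succ) = a' ∘ finRotate (n + 1) := by
    funext k
    induction k using Fin.lastCases with
    | last => simp [a']
    | cast k =>
      simp only [Function.comp_apply, finRotate_apply, Fin.coeSucc_eq_succ, a', Fin.cons_succ,
        Fin.succ_castSucc]
  have hend : ∀ v,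
      baryPoint (fun k => a k.castSucc) v + (1 - ∑ k, v k) * d = baryPoint a' v := by
    intro v
    simp only [baryPoint, a', Fin.cons_zero, Fin.cons_succ, Fin.castSucc_zero, d]
    ring
  have hinner : ∀ v, ∫ x in (0 : ℝ)..1 - ∑ k, v k,
      deriv g (baryPoint a (Fin.insertNth (Fin.last n) x v)) =
        (g (baryPoint a' v) - g (baryPoint (fun k => a k.castSucc) v)) / d := by
    intro v
    simp only [baryPoint_insertNth_last]
    rw [intervalIntegral_deriv_comp_add_mul hg hg' _ _ (sub_ne_zero.2 hne), hend]
  have hint : ∀ b : Fin (n + 1) → ℝ,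
      IntegrableOn (fun v => g (baryPoint b v)) (stdSimplexSet n) := fun b =>
    (hg.continuous.comp (continuous_baryPoint b)).continuousOn.integrableOn_compact
      (isCompact_stdSimplexSet n)
  rw [hrot, simplexIntegral_comp_perm hg.continuous, simplexIntegral,
    setIntegral_stdSimplexSet_succ (Fin.last n) (by fun_prop)]
  simp only [hinner]
  rw [integral_div, integral_sub (hint a') (hint _)]
  rfl

theorem cDivDiff_ofFn_succ (f : ℝ → ℝ) {n : ℕ} (a : Fin (n + 2) → ℝ) :
    cDivDiff f (List.ofFn a) =
      if a (Fin.last (n + 1)) = a 0 then iteratedDeriv (n + 1) f (a 0) / (n + 1).factorial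
      else (cDivDiff f (List.ofFn fun i : Fin (n + 1) => a i.succ) -
          cDivDiff f (List.ofFn fun i : Fin (n + 1) => a i.castSucc)) /
        (a (Fin.last (n + 1)) - a 0) := by
  have htail : a 1 :: List.ofFn (fun i : Fin n => a i.succ.succ) =
      List.ofFn fun i : Fin (n + 1) => a i.succ := by
    rw [List.ofFn_succ, Fin.succ_zero_eq_one]
  have hlast : (a 1 :: List.ofFn fun i : Fin n => a i.succ.succ).getLast (by simp) =
      a (Fin.last (n + 1)) := by
    simp only [htail, List.getLast_ofFn_succ, Fin.succ_last]
  have hinit : a 0 :: (a 1 :: List.ofFn fun i : Fin n => a i.succ.succ).dropLast =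
      List.ofFn fun i : Fin (n + 1) => a i.castSucc := by
    rw [htail, List.ofFn_succ' (fun i : Fin (n + 1) => a i.succ), List.concat_eq_append,
      List.dropLast_concat, List.ofFn_succ (f := fun i : Fin (n + 1) => a i.castSucc)]
    simp
  rw [List.ofFn_succ, ← htail, cDivDiff, hlast, hinit, htail, List.length_ofFn]

theorem cDivDiff_ofFn_eq_simplexIntegral {n : ℕ} {f : ℝ → ℝ} (hf : ContDiff ℝ n f)
    {a : Fin (n + 1) → ℝ} (ha : Monotone a) :
    cDivDiff f (List.ofFn a) = simplexIntegral (iteratedDeriv n f) a := by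
  induction n with
  | zero =>
    have hconst : a = fun _ => a 0 := funext fun i => congrArg a (Fin.fin_one_eq_zero i)
    rw [hconst, simplexIntegral_const]
    simp [cDivDiff]
  | succ n ih =>
    rw [cDivDiff_ofFn_succ]
    split_ifs with hlast
    · have hconst : a = fun _ => a 0 :=
        funext fun i => le_antisymm (hlast ▸ ha (Fin.le_last i)) (ha (Fin.zero_le i))
      rw [hconst, simplexIntegral_const, smul_eq_mul, inv_mul_eq_div]
    · have hfn : ContDiff ℝ n f := hf.of_le (by exact_mod_cast n.le_succ)
      rw [ih hfn fun i j hij => ha (Fin.succ_le_succ_iff.2 hij),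
        ih hfn fun i j hij => ha (Fin.castSucc_le_castSucc_iff.2 hij), iteratedDeriv_succ,
        simplexIntegral_deriv
          (hf.differentiable_iteratedDeriv n (by exact_mod_cast n.lt_succ_self))
          (by simpa only [← iteratedDeriv_succ] using hf.continuous_iteratedDeriv (n + 1) le_rfl)
          a hlast]

end

theorem hermite_genocchi_general (n : ℕ) (f : ℝ → ℝ) (hf : ContDiff ℝ n f)
    (a : Fin (n + 1) → ℝ) :
    cDivDiff f (List.ofFn (a ∘ Tuple.sort a)) =
      ∫ u in stdSimplexSet n,
        iteratedDeriv n f ((1 - ∑ k, u k) * a 0 + ∑ k, u k * a k.succ) := by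
  rw [cDivDiff_ofFn_eq_simplexIntegral hf (Tuple.monotone_sort a),
    simplexIntegral_comp_perm (hf.continuous_iteratedDeriv n le_rfl)]
  rfl

/-- **Hermite–Genocchi formula**: for `f ∈ Cⁿ(ℝ)` and real numbers `a₀,…,aₙ`
(not necessarily distinct), the divided difference `f[a₀,…,aₙ]` (computed after
sorting the nodes, which is harmless by symmetry) equals the integral over the
standard simplex of `f⁽ⁿ⁾(t₀a₀ + t₁a₁ + ⋯ + tₙaₙ)`, where `t₀ = 1 − ∑ₖ₌₁ⁿ tₖ`. -/
theorem hermite_genocchi (n : ℕ) (hn : 1 ≤ n) (f : ℝ → ℝ) (hf : ContDiff ℝ n f)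
    (a : Fin (n + 1) → ℝ) :
    cDivDiff f (List.ofFn (a ∘ Tuple.sort a)) =
      ∫ u in stdSimplexSet n,
        iteratedDeriv n f ((1 - ∑ k, u k) * a 0 + ∑ k, u k * a k.succ) :=
  hermite_genocchi_general n f hf a
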